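/- arXiv:math/0702592 — 6 statements merged into one kernel-verified Lean document; each statement's English description precedes it below -/
import Mathlib

section
/- Let M be a locally right Garside monoid, x ∈ M, and X a nonempty subset of the set of right divisors of x that is closed under left lcm (i.e., any two elements of X have a left lcm in M, and it lies in X). Then X has a greatest element with respect to right divisibility, i.e., there exists x₁ ∈ X such that every element of X is a right divisor of x₁. -/
/-!
The absence of infinite chains of right divisors of `x` makes proper left multiplication
well founded on `Div_R(x)`, so `X` has an element `t` with no proper left multiple in `X`.
For `a ∈ X`, the left lcm of `t` and `a` lies in `X` and is a left multiple `w * t`;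
maximality forces `w = 1`, so that lcm is `t` itself and `a` right-divides `t`.
-/

/-- `y` right-divides `x`, i.e. `x` is a left multiple of `y`. -/
def RDiv {M : Type*} [Monoid M] (x y : M) : Prop := ∃ z, x = z * y

/-- `z` is a left lcm of `a` and `b`: it is a common left multiple of `a` and `b`, and
every common left multiple of `a` and `b` is a left multiple of `z`. -/
def IsLeftLcm {M : Type*} [Monoid M] (z a b : M) : Prop :=
  RDiv z a ∧ RDiv z b ∧ ∀ w, RDiv w a → RDiv w b → RDiv w z

/-- A monoid is locally right Garside if it is right cancellative, any two elements
admitting a common left multiple admit a left lcm, and, for every `x`, there is no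
infinite strictly increasing chain of right divisors of `x`. -/
structure LocallyRightGarside (M : Type*) [Monoid M] : Prop where
  rightCancel : ∀ x y z : M, x * z = y * z → x = y
  lcm : ∀ a b : M, (∃ w, RDiv w a ∧ RDiv w b) → ∃ z, IsLeftLcm z a b
  noChain : ∀ x : M, ¬ ∃ f : ℕ → M,
      (∀ k, RDiv x (f k)) ∧ (∀ k, ∃ w, w ≠ 1 ∧ f (k + 1) = w * f k)

/-- `t` is the `A`-tail of `x`: a right divisor of `x` lying in `A` which is maximal
with respect to right divisibility. -/
def IsTail {M : Type*} [Monoid M] (A : Set M) (x t : M) : Prop :=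
  t ∈ A ∧ RDiv x t ∧ ∀ a ∈ A, RDiv x a → RDiv t a

/-- A submonoid is closed if it is closed under left lcm and under left divisor. -/
def ClosedSubmonoid {M : Type*} [Monoid M] (M₁ : Submonoid M) : Prop :=
  (∀ a ∈ M₁, ∀ b ∈ M₁, ∀ z : M, IsLeftLcm z a b → z ∈ M₁) ∧
  (∀ a ∈ M₁, ∀ y z : M, a = y * z → y ∈ M₁)

def ProperRDiv {M : Type*} [Monoid M] (z t : M) : Prop := ∃ w, w ≠ 1 ∧ z = w * t

namespace LocallyRightGarside

variable {M : Type*} [Monoid M]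

theorem wellFounded_properRDiv (h : LocallyRightGarside M) (x : M) :
    WellFounded fun a b : {y // RDiv x y} => ProperRDiv a.1 b.1 :=
  wellFounded_iff_isEmpty_descending_chain.mpr
    ⟨fun ⟨f, hf⟩ => h.noChain x ⟨fun k => (f k).1, fun k => (f k).2, hf⟩⟩

theorem exists_not_properRDiv_of_rightDivisors (h : LocallyRightGarside M) {x : M}
    {X : Set M} (hne : X.Nonempty) (hdiv : ∀ a ∈ X, RDiv x a) :
    ∃ t ∈ X, ∀ z ∈ X, ¬ ProperRDiv z t := by
  obtain ⟨t₀, ht₀⟩ := hne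
  obtain ⟨⟨t, _⟩, ht, hmin⟩ := (h.wellFounded_properRDiv x).has_min {d | d.1 ∈ X}
    ⟨⟨t₀, hdiv t₀ ht₀⟩, ht₀⟩
  exact ⟨t, ht, fun z hz => hmin ⟨z, hdiv z hz⟩ hz⟩

end LocallyRightGarside

theorem rdiv_of_isLeftLcm_of_not_properRDiv {M : Type*} [Monoid M] {z t a : M}
    (hz : IsLeftLcm z t a) (hmax : ¬ ProperRDiv z t) : RDiv t a := by
  obtain ⟨⟨w, rfl⟩, hza, -⟩ := hz
  have hw : w = 1 := by
    by_contra hw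
    exact hmax ⟨w, hw, rfl⟩
  rwa [hw, one_mul] at hza

/-- In a locally right Garside monoid, a nonempty subset `X` of the right
divisors of `x` that is closed under left lcm admits a greatest element with respect
to right divisibility. -/
theorem exists_greatest_of_closed_subset_of_rightDivisors {M : Type*} [Monoid M]
    (h : LocallyRightGarside M) (x : M) (X : Set M) (hne : X.Nonempty)
    (hdiv : ∀ a ∈ X, RDiv x a)
    (hclosed : ∀ a ∈ X, ∀ b ∈ X, ∃ z ∈ X, IsLeftLcm z a b) :
    ∃ x₁ ∈ X, ∀ a ∈ X, RDiv x₁ a := by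
  obtain ⟨t, ht, hmax⟩ := h.exists_not_properRDiv_of_rightDivisors hne hdiv
  refine ⟨t, ht, fun a ha => ?_⟩
  obtain ⟨z, hzX, hz⟩ := hclosed t ht a ha
  exact rdiv_of_isLeftLcm_of_not_properRDiv hz (hmax z hzX)
end

section
/- Let M be a locally right Garside monoid and A ⊆ M containing 1 and closed under left lcm. Then for every x ∈ M there exists a unique right divisor x₁ of x lying in A that is maximal with respect to right divisibility (every right divisor of x lying in A is a right divisor of x₁); this x₁ is called the A-tail of x. -/
/-! Strict right divisibility is well founded among the right divisors of `x`, so the right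
divisors of `x` lying in `A` have a maximal element `t`. Given another such divisor `a`, the
left lcm of `t` and `a` lies in `A` and divides `x`, so by maximality it is `t` itself, and `a`
right-divides `t`. Uniqueness holds because right cancellativity together with the chain
condition leaves no nontrivial invertible elements, making right divisibility antisymmetric. -/

def StrictRDiv {M : Type*} [Monoid M] (a b : M) : Prop := ∃ w, w ≠ 1 ∧ a = w * b

namespace LocallyRightGarside

variable {M : Type*} [Monoid M]

theorem mul_eq_one_comm (h : LocallyRightGarside M) {u v : M} (huv : u * v = 1) : v * u = 1 :=
  h.rightCancel _ _ v (by rw [mul_assoc, huv, mul_one, one_mul])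

theorem eq_one_of_mul_eq_one (h : LocallyRightGarside M) {u v : M} (huv : u * v = 1) :
    u = 1 := by
  have hcomm : Commute v u := (h.mul_eq_one_comm huv).trans huv.symm
  by_contra hu
  refine h.noChain 1 ⟨(u ^ ·), fun k => ⟨v ^ k, ?_⟩, fun k => ⟨u, hu, pow_succ' u k⟩⟩
  rw [← hcomm.mul_pow, h.mul_eq_one_comm huv, one_pow]

theorem rdiv_antisymm (h : LocallyRightGarside M) {a b : M} (hab : RDiv a b) (hba : RDiv b a) :
    a = b := by
  obtain ⟨u, rfl⟩ := hab
  obtain ⟨v, hv⟩ := hba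
  have hvu : v * u = 1 := h.rightCancel _ _ b (by rw [mul_assoc, ← hv, one_mul])
  rw [h.eq_one_of_mul_eq_one (h.mul_eq_one_comm hvu), one_mul]

theorem wellFounded_strictRDiv (h : LocallyRightGarside M) (x : M) :
    WellFounded fun a b : {t : M // RDiv x t} => StrictRDiv a.1 b.1 :=
  wellFounded_iff_isEmpty_descending_chain.2
    ⟨fun ⟨f, hf⟩ => h.noChain x ⟨fun k => (f k).1, fun k => (f k).2, hf⟩⟩

theorem exists_maximal_rdiv_mem (h : LocallyRightGarside M) {x : M} (A : Set M) {a : M}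
    (haA : a ∈ A) (hxa : RDiv x a) :
    ∃ t ∈ A, RDiv x t ∧ ∀ s ∈ A, RDiv x s → ¬StrictRDiv s t := by
  obtain ⟨⟨t, hxt⟩, htA, hmax⟩ :=
    (h.wellFounded_strictRDiv x).has_min {t | t.1 ∈ A} ⟨⟨a, hxa⟩, haA⟩
  exact ⟨t, htA, hxt, fun s hsA hxs => hmax ⟨s, hxs⟩ hsA⟩

end LocallyRightGarside

/-- In a locally right Garside monoid, if `A` contains `1` and is closed
under left lcm, then every `x` admits a unique maximal right divisor lying in `A`
(the `A`-tail of `x`). -/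
theorem existsUnique_tail {M : Type*} [Monoid M]
    (h : LocallyRightGarside M) (A : Set M) (hone : (1 : M) ∈ A)
    (hclosed : ∀ a ∈ A, ∀ b ∈ A, (∃ w : M, RDiv w a ∧ RDiv w b) →
        ∃ z ∈ A, IsLeftLcm z a b)
    (x : M) :
    ∃! t : M, IsTail A x t := by
  obtain ⟨t, htA, hxt, hmax⟩ := h.exists_maximal_rdiv_mem A hone ⟨x, (mul_one x).symm⟩
  have htail : IsTail A x t := by
    refine ⟨htA, hxt, fun a haA hxa => ?_⟩
    obtain ⟨z, hzA, hzt, hza, hzmin⟩ := hclosed t htA a haA ⟨x, hxt, hxa⟩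
    obtain ⟨w, rfl⟩ := hzt
    have hw : w = 1 := by
      by_contra hw
      exact hmax _ hzA (hzmin x hxt hxa) ⟨w, hw, rfl⟩
    rwa [hw, one_mul] at hza
  exact ⟨t, htail, fun s hs =>
    h.rdiv_antisymm (hs.2.2 t htA hxt) (htail.2.2 s hs.1 hs.2.1)⟩
end

section
/- Let M be a locally right Garside monoid and (M₂, M₁) a covering of M (two closed submonoids whose union generates M). Then every non-trivial element x of M admits a unique decomposition x = x_p···x₂x₁ with x_p ≠ 1 such that, for each r ≥ 1, x_r belongs to M_{[r]} and no non-trivial element of M_{[r]} right-divides x_p···x_{r+1}, where [r] = 1 if r is odd and [r] = 2 if r is even. Moreover x_r ≠ 1 for all r ≥ 2. -/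
/-- `l = [x_1, x_2, …, x_p]` (written from the right) is an alternating
`(M₂, M₁)`-decomposition of `x`: `x = x_p ⋯ x_2 x_1`, `x_p ≠ 1`, and for each `r ≥ 1`
the entry `x_r` lies in `M_{[r]}` (where `[r] = 1` for `r` odd and `[r] = 2` for `r`
even) while no non-trivial element of `M_{[r]}` right-divides `x_p ⋯ x_{r+1}`. -/
def AltDecomp {M : Type*} [Monoid M] (M₂ M₁ : Submonoid M) (x : M) (l : List M) : Prop :=
  l ≠ [] ∧ l.reverse.prod = x ∧ l.getLast? ≠ some 1 ∧
  ∀ (i : ℕ) (hi : i < l.length),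
    (l[i]'hi ∈ (if i % 2 = 0 then M₁ else M₂)) ∧
    ∀ a ∈ (if i % 2 = 0 then M₁ else M₂),
      RDiv ((l.drop (i + 1)).reverse.prod) a → a = 1

namespace AltProof

variable {M : Type*} [Monoid M]

lemma eq_one_of_mul_eq_one (h : LocallyRightGarside M) {u v : M} (huv : u * v = 1) :
    v = 1 := by
  by_contra hv
  apply h.noChain 1
  have key : ∀ k : ℕ, u ^ k * v ^ k = 1 := by
    intro k
    induction k with
    | zero => simp
    | succ n ih =>
      rw [pow_succ u, pow_succ' v, mul_assoc, ← mul_assoc u v, huv, one_mul, ih]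
  exact ⟨fun k => v ^ k, fun k => ⟨u ^ k, (key k).symm⟩,
    fun k => ⟨v, hv, pow_succ' v k⟩⟩

lemma eq_one_of_mul_eq_one' (h : LocallyRightGarside M) {u v : M} (huv : u * v = 1) :
    u = 1 := by
  have := eq_one_of_mul_eq_one h huv
  rw [this, mul_one] at huv; exact huv

/-- No infinite strictly increasing chain inside a set of right divisors of `x`. -/
lemma no_ascending (h : LocallyRightGarside M) (x : M) {S : M → Prop}
    (hstep : ∀ t, S t → ∃ t' w, S t' ∧ w ≠ 1 ∧ t' = w * t)
    (hdvd : ∀ t, S t → RDiv x t) (t0 : M) (ht0 : S t0) : False := by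
  choose F W hF hW hFW using hstep
  let g : ℕ → {t // S t} := fun n =>
    Nat.rec ⟨t0, ht0⟩ (fun _ p => ⟨F p.1 p.2, hF p.1 p.2⟩) n
  apply h.noChain x
  exact ⟨fun k => (g k).1, fun k => hdvd _ (g k).2,
    fun k => ⟨W (g k).1 (g k).2, hW _ _, hFW (g k).1 (g k).2⟩⟩

/-- Existence of tails in closed submonoids. -/
lemma exists_tail (h : LocallyRightGarside M) {A : Submonoid M}
    (hA : ClosedSubmonoid A) (x : M) : ∃ t, IsTail (A : Set M) x t := by
  by_contra hno
  push_neg at hno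
  refine no_ascending h x (S := fun t => t ∈ A ∧ RDiv x t) ?_ (fun t ht => ht.2)
    1 ⟨A.one_mem, ⟨x, (mul_one x).symm⟩⟩
  rintro t ⟨htA, htx⟩
  have hnt := hno t
  rw [IsTail] at hnt
  push_neg at hnt
  obtain ⟨a, haA, hax, hta⟩ := hnt htA htx
  obtain ⟨z, hz⟩ := h.lcm t a ⟨x, htx, hax⟩
  have hzA : z ∈ A := hA.1 t htA a haA z hz
  have hzx : RDiv x z := hz.2.2 x htx hax
  obtain ⟨w, hw⟩ := hz.1
  refine ⟨z, w, ⟨hzA, hzx⟩, ?_, hw⟩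
  rintro rfl
  rw [one_mul] at hw
  exact hta (hw ▸ hz.2.1)

lemma tail_unique (h : LocallyRightGarside M) {A : Set M} {x t t' : M}
    (ht : IsTail A x t) (ht' : IsTail A x t') : t = t' := by
  obtain ⟨u, hu⟩ := ht.2.2 t' ht'.1 ht'.2.1
  obtain ⟨v, hv⟩ := ht'.2.2 t ht.1 ht.2.1
  have : (u * v) * t = 1 * t := by rw [one_mul, mul_assoc, ← hv, ← hu]
  have huv : u * v = 1 := h.rightCancel _ _ _ this
  have hv1 : v = 1 := eq_one_of_mul_eq_one h huv
  rw [hv, hv1, one_mul]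

lemma quotient_trivial_tail (h : LocallyRightGarside M) {A : Submonoid M}
    {x y t : M} (ht : IsTail (A : Set M) x t) (hy : x = y * t) :
    ∀ a ∈ A, RDiv y a → a = 1 := by
  rintro a haA ⟨z, hz⟩
  have hmem : a * t ∈ A := A.mul_mem haA ht.1
  have hdvd : RDiv x (a * t) := ⟨z, by rw [hy, hz, mul_assoc]⟩
  obtain ⟨w, hw⟩ := ht.2.2 (a * t) hmem hdvd
  have : (w * a) * t = 1 * t := by rw [one_mul, mul_assoc, ← hw]
  have := h.rightCancel _ _ _ this
  exact eq_one_of_mul_eq_one h this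

lemma tail_of_mul (h : LocallyRightGarside M) {A : Submonoid M}
    (hA : ClosedSubmonoid A) {y t : M}
    (htriv : ∀ a ∈ A, RDiv y a → a = 1) (ht : t ∈ A) :
    IsTail (A : Set M) (y * t) t := by
  refine ⟨ht, ⟨y, rfl⟩, ?_⟩
  intro a ha hd
  obtain ⟨z, hz⟩ := h.lcm a t ⟨y * t, hd, ⟨y, rfl⟩⟩
  have hzA : z ∈ A := hA.1 a ha t ht z hz
  obtain ⟨u, hu⟩ := hz.2.2 (y * t) hd ⟨y, rfl⟩
  obtain ⟨v, hv⟩ := hz.2.1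
  have hvA : v ∈ A := hA.2 z hzA v t hv
  have hyuv : y * t = (u * v) * t := by rw [mul_assoc, ← hv, hu]
  have hy : y = u * v := h.rightCancel _ _ _ hyuv
  have hv1 : v = 1 := htriv v hvA ⟨u, hy⟩
  have : z = t := by rw [hv, hv1, one_mul]
  exact this ▸ hz.1

end AltProof

section Part2
variable {M : Type*} [Monoid M]
namespace AltProof

/-- `y'` is a proper left divisor of `y`, and `y` left-divides `x`. -/
def Rel (x y' y : M) : Prop := (∃ s, x = y * s) ∧ ∃ w, w ≠ 1 ∧ y = y' * w

lemma rel_wf (h : LocallyRightGarside M) (x : M) : WellFounded (Rel x) := by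
  by_contra hwf
  have hex : ∃ a, ¬ Acc (Rel x) a := by
    by_contra h'; push_neg at h'; exact hwf ⟨fun a => h' a⟩
  obtain ⟨a, ha⟩ := hex
  have step : ∀ b, ¬ Acc (Rel x) b → ∃ c, Rel x c b ∧ ¬ Acc (Rel x) c := by
    intro b hb
    by_contra h'
    push_neg at h'
    exact hb (Acc.intro b fun c hc => h' c hc)
  choose C hC1 hC2 using step
  let g : ℕ → {y // ¬ Acc (Rel x) y} := fun n =>
    Nat.rec ⟨a, ha⟩ (fun _ p => ⟨C p.1 p.2, hC2 p.1 p.2⟩) n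
  have hrel : ∀ k, Rel x ((g (k + 1)).1) ((g k).1) := fun k => hC1 (g k).1 (g k).2
  have hwex : ∀ k, ∃ w, w ≠ 1 ∧ (g k).1 = (g (k + 1)).1 * w := fun k => (hrel k).2
  choose w hw1 hw2 using hwex
  obtain ⟨s0, hs0⟩ := (hrel 0).1
  let f : ℕ → M := fun n => Nat.rec s0 (fun k fk => w k * fk) n
  have hf : ∀ k, x = (g k).1 * f k := by
    intro k
    induction k with
    | zero => exact hs0
    | succ n ih =>
      show x = (g (n + 1)).1 * (w n * f n)
      rw [← mul_assoc, ← hw2 n]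
      exact ih
  exact h.noChain x ⟨f, fun k => ⟨(g k).1, hf k⟩, fun k => ⟨w k, hw1 k, rfl⟩⟩

lemma exists_div {M₂ M₁ : Submonoid M}
    (hgen : Submonoid.closure ((M₂ : Set M) ∪ (M₁ : Set M)) = ⊤)
    (y : M) (hy : y ≠ 1) :
    ∃ a, a ≠ 1 ∧ (a ∈ M₂ ∨ a ∈ M₁) ∧ RDiv y a := by
  have hmem : y ∈ Submonoid.closure ((M₂ : Set M) ∪ (M₁ : Set M)) := by
    rw [hgen]; trivial
  have key : ∀ z, z ∈ Submonoid.closure ((M₂ : Set M) ∪ (M₁ : Set M)) →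
      z = 1 ∨ ∃ a, a ≠ 1 ∧ (a ∈ M₂ ∨ a ∈ M₁) ∧ RDiv z a := by
    intro z0 hz0
    induction hz0 using Submonoid.closure_induction with
    | mem z hz =>
      by_cases hz1 : z = 1
      · exact Or.inl hz1
      · exact Or.inr ⟨z, hz1, by simpa using hz, ⟨1, (one_mul z).symm⟩⟩
    | one => exact Or.inl rfl
    | mul z v hz hv ihz ihv =>
      rcases ihv with rfl | ⟨a, h1, h2, u, h3⟩
      · rcases ihz with h | ⟨a, h1, h2, u, h3⟩
        · exact Or.inl (by rw [h, mul_one])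
        · exact Or.inr ⟨a, h1, h2, ⟨u, by rw [mul_one, h3]⟩⟩
      · exact Or.inr ⟨a, h1, h2, ⟨z * u, by rw [h3, mul_assoc]⟩⟩
  exact (key y hmem).resolve_left hy

end AltProof
end Part2

section Part3
variable {M : Type*} [Monoid M]
namespace AltProof

def Conds (A B : Submonoid M) (l : List M) : Prop :=
  ∀ (i : ℕ) (hi : i < l.length),
    (l[i]'hi ∈ (if i % 2 = 0 then A else B)) ∧
    ∀ a ∈ (if i % 2 = 0 then A else B),
      RDiv ((l.drop (i + 1)).reverse.prod) a → a = 1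

lemma revprod_cons (t : M) (l : List M) :
    (t :: l).reverse.prod = l.reverse.prod * t := by simp

lemma conds_cons {A B : Submonoid M} {t : M} {l : List M} :
    Conds A B (t :: l) ↔
      (t ∈ A ∧ ∀ a ∈ A, RDiv l.reverse.prod a → a = 1) ∧ Conds B A l := by
  constructor
  · intro hc
    refine ⟨⟨?_, ?_⟩, ?_⟩
    · exact (hc 0 (by simp)).1
    · simpa using (hc 0 (by simp)).2
    · intro i hi
      have hc' := hc (i + 1) (by simpa using Nat.succ_lt_succ hi)
      rcases Nat.mod_two_eq_zero_or_one i with hp | hp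
      · have h1 : (i + 1) % 2 = 1 := by omega
        exact ⟨by simpa [h1, hp] using hc'.1, by simpa [h1, hp] using hc'.2⟩
      · have h1 : (i + 1) % 2 = 0 := by omega
        exact ⟨by simpa [h1, hp] using hc'.1, by simpa [h1, hp] using hc'.2⟩
  · rintro ⟨⟨htA, htriv⟩, hcl⟩ i hi
    match i with
    | 0 => exact ⟨by simpa using htA, by simpa using htriv⟩
    | (i + 1) =>
      have hi' : i < l.length := by simpa using Nat.lt_of_succ_lt_succ hi
      have hc' := hcl i hi'
      rcases Nat.mod_two_eq_zero_or_one i with hp | hp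
      · have h1 : (i + 1) % 2 = 1 := by omega
        exact ⟨by simpa [h1, hp] using hc'.1, by simpa [h1, hp] using hc'.2⟩
      · have h1 : (i + 1) % 2 = 0 := by omega
        exact ⟨by simpa [h1, hp] using hc'.1, by simpa [h1, hp] using hc'.2⟩

lemma prod_one (h : LocallyRightGarside M) :
    ∀ l : List M, l.reverse.prod = 1 → l.getLast? ≠ some 1 → l = [] := by
  intro l
  induction l with
  | nil => intro _ _; rfl
  | cons t l ih =>
    intro hp hl
    rw [revprod_cons] at hp
    have ht1 : t = 1 := eq_one_of_mul_eq_one h hp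
    have hlp : l.reverse.prod = 1 := by rw [ht1, mul_one] at hp; exact hp
    cases l with
    | nil => exact absurd (by simp [ht1]) hl
    | cons b rb =>
      have : b :: rb = [] := ih hlp (by rw [← List.getLast?_cons_cons]; exact hl)
      simp at this

lemma exists_aux (h : LocallyRightGarside M) (x : M) :
    ∀ y : M, ∀ A B : Submonoid M, ClosedSubmonoid A → ClosedSubmonoid B →
    (∀ z : M, z ≠ 1 → ∃ a, a ≠ 1 ∧ (a ∈ A ∨ a ∈ B) ∧ RDiv z a) →
    (∃ s, x = y * s) → (∀ a ∈ B, RDiv y a → a = 1) →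
    ∃ l : List M, l.reverse.prod = y ∧ Conds A B l ∧ ∀ a ∈ l, a ≠ 1 := by
  intro y
  induction y using (rel_wf h x).induction with
  | _ y IH =>
  intro A B hA hB hg hyx hytriv
  by_cases hy1 : y = 1
  · refine ⟨[], by simp [hy1], ?_, by simp⟩
    intro i hi
    simp at hi
  · obtain ⟨t, ht⟩ := exists_tail h hA y
    obtain ⟨y', hy'⟩ := ht.2.1
    have ht1 : t ≠ 1 := by
      obtain ⟨a, ha1, haAB, hadvd⟩ := hg y hy1
      have haA : a ∈ A := haAB.resolve_right (fun hB' => ha1 (hytriv a hB' hadvd))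
      have hta := ht.2.2 a haA hadvd
      rintro rfl
      obtain ⟨w, hw⟩ := hta
      exact ha1 (eq_one_of_mul_eq_one h hw.symm)
    have hrel : Rel x y' y := ⟨hyx, t, ht1, hy'⟩
    have htriv' : ∀ a ∈ A, RDiv y' a → a = 1 := quotient_trivial_tail h ht hy'
    have hy'x : ∃ s, x = y' * s := by
      obtain ⟨s, hs⟩ := hyx
      exact ⟨t * s, by rw [hs, hy', mul_assoc]⟩
    obtain ⟨l', hl'prod, hl'conds, hl'ne⟩ :=
      IH y' hrel B A hB hA
        (fun z hz => by obtain ⟨a, h1, h2, h3⟩ := hg z hz; exact ⟨a, h1, h2.symm, h3⟩)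
        hy'x htriv'
    refine ⟨t :: l', ?_, ?_, ?_⟩
    · rw [revprod_cons, hl'prod, ← hy']
    · exact conds_cons.mpr ⟨⟨ht.1, by rw [hl'prod]; exact htriv'⟩, hl'conds⟩
    · intro a ha
      rcases List.mem_cons.mp ha with rfl | ha'
      · exact ht1
      · exact hl'ne a ha'

end AltProof
end Part3

section Part4
variable {M : Type*} [Monoid M]
namespace AltProof

lemma unique_aux (h : LocallyRightGarside M) :
    ∀ l l' : List M, ∀ A B : Submonoid M, ClosedSubmonoid A → ClosedSubmonoid B →
    l.reverse.prod = l'.reverse.prod → Conds A B l → Conds A B l' →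
    l.getLast? ≠ some 1 → l'.getLast? ≠ some 1 → l = l' := by
  intro l
  induction l with
  | nil =>
    intro l' A B _ _ hprod _ _ _ hlast'
    exact (prod_one h l' (by simpa using hprod.symm) hlast').symm
  | cons t l ih =>
    intro l' A B hA hB hprod hc hc' hlast hlast'
    cases l' with
    | nil =>
      have : t :: l = [] := prod_one h _ (by simpa using hprod) hlast
      simp at this
    | cons t' r' =>
      have hcc := conds_cons.mp hc
      have hcc' := conds_cons.mp hc'
      have htail : IsTail (A : Set M) ((t :: l).reverse.prod) t := by
        rw [revprod_cons]; exact tail_of_mul h hA hcc.1.2 hcc.1.1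
      have htail' : IsTail (A : Set M) ((t :: l).reverse.prod) t' := by
        rw [hprod, revprod_cons]; exact tail_of_mul h hA hcc'.1.2 hcc'.1.1
      have htt : t = t' := tail_unique h htail htail'
      have hpr : l.reverse.prod = r'.reverse.prod := by
        apply h.rightCancel _ _ t
        rw [revprod_cons, revprod_cons] at hprod
        rw [← htt] at hprod
        exact hprod
      have hll : l = r' := by
        cases l with
        | nil =>
          cases r' with
          | nil => rfl
          | cons b rb =>
            have : b :: rb = [] := prod_one h _ (by simpa using hpr.symm)
              (by rw [← List.getLast?_cons_cons]; exact hlast')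
            simp at this
        | cons a la =>
          cases r' with
          | nil =>
            have : a :: la = [] := prod_one h _ (by simpa using hpr)
              (by rw [← List.getLast?_cons_cons]; exact hlast)
            simp at this
          | cons b rb =>
            exact ih _ B A hB hA hpr hcc.2 hcc'.2
              (by rw [← List.getLast?_cons_cons (a := t)]; exact hlast)
              (by rw [← List.getLast?_cons_cons (a := t')]; exact hlast')
      rw [htt, hll]

end AltProof
end Part4


/-- In a locally right Garside monoid covered by two closed submonoids
`M₂, M₁`, every non-trivial element admits a unique alternating decomposition
`x = x_p ⋯ x_2 x_1` as above; moreover `x_r ≠ 1` for all `r ≥ 2`. -/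
theorem existsUnique_alternating_decomposition {M : Type*} [Monoid M]
    (h : LocallyRightGarside M) (M₂ M₁ : Submonoid M)
    (h2 : ClosedSubmonoid M₂) (h1 : ClosedSubmonoid M₁)
    (hgen : Submonoid.closure ((M₂ : Set M) ∪ (M₁ : Set M)) = ⊤)
    (x : M) (hx : x ≠ 1) :
    ∃ l : List M,
      (AltDecomp M₂ M₁ x l ∧ ∀ (i : ℕ) (hi : i < l.length), 1 ≤ i → l[i]'hi ≠ 1) ∧
      ∀ l' : List M, AltDecomp M₂ M₁ x l' → l' = l := by

  classical
  obtain ⟨t₁, ht₁⟩ := AltProof.exists_tail h h1 x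
  obtain ⟨y₁, hy₁⟩ := ht₁.2.1
  have htriv1 : ∀ a ∈ M₁, RDiv y₁ a → a = 1 := AltProof.quotient_trivial_tail h ht₁ hy₁
  have hg : ∀ z : M, z ≠ 1 → ∃ a, a ≠ 1 ∧ (a ∈ M₂ ∨ a ∈ M₁) ∧ RDiv z a :=
    fun z hz => AltProof.exists_div hgen z hz
  obtain ⟨l', hl'prod, hl'conds, hl'ne⟩ :=
    AltProof.exists_aux h x y₁ M₂ M₁ h2 h1 hg ⟨t₁, hy₁⟩ htriv1
  have hprodL : (t₁ :: l').reverse.prod = x := by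
    rw [AltProof.revprod_cons, hl'prod, ← hy₁]
  have hcondsL : AltProof.Conds M₁ M₂ (t₁ :: l') :=
    AltProof.conds_cons.mpr ⟨⟨ht₁.1, by rw [hl'prod]; exact htriv1⟩, hl'conds⟩
  have hlastL : (t₁ :: l').getLast? ≠ some 1 := by
    cases l' with
    | nil =>
      have hy1 : y₁ = 1 := by simpa using hl'prod.symm
      simp only [List.getLast?_singleton, ne_eq, Option.some.injEq]
      intro ht
      exact hx (by rw [hy₁, hy1, one_mul, ht])
    | cons b rb =>
      rw [List.getLast?_cons_cons]
      intro hcon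
      exact hl'ne 1 (List.mem_of_mem_getLast? hcon) rfl
  refine ⟨t₁ :: l', ⟨⟨by simp, hprodL, hlastL, hcondsL⟩, ?_⟩, ?_⟩
  · intro i hi h1i
    match i, hi with
    | (j + 1), hi =>
      simp only [List.getElem_cons_succ]
      exact hl'ne _ (List.getElem_mem _)
  · intro l'' hd
    exact AltProof.unique_aux h l'' (t₁ :: l') M₁ M₂ h1 h2
      (by rw [hd.2.1, hprodL]) hd.2.2.2 hcondsL hd.2.2.1 hlastL
end

section
/- Every closed submonoid of a locally right Garside monoid is itself locally right Garside. -/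
/-! Right cancellativity and the chain condition pass to every submonoid. Closure under left
divisors makes right divisibility in `M₁` the restriction of right divisibility in `M`, so the
left lcm in `M` of two elements of `M₁`, which lies in `M₁`, is also their left lcm in `M₁`. -/

namespace Submonoid

variable {M : Type*} [Monoid M]

def LeftDivisorClosed (S : Submonoid M) : Prop :=
  ∀ a ∈ S, ∀ y z : M, a = y * z → y ∈ S

theorem leftDivisorClosed_of_closedSubmonoid {S : Submonoid M} (hS : ClosedSubmonoid S) :
    S.LeftDivisorClosed :=
  hS.2

variable {S : Submonoid M}

theorem rdiv_coe {x y : S} (hxy : RDiv x y) : RDiv (x : M) y := by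
  obtain ⟨z, rfl⟩ := hxy
  exact ⟨z, rfl⟩

theorem rdiv_of_rdiv_coe (hS : S.LeftDivisorClosed) {x y : S} (hxy : RDiv (x : M) y) :
    RDiv x y := by
  obtain ⟨z, hz⟩ := hxy
  exact ⟨⟨z, hS x x.2 z y hz⟩, Subtype.ext hz⟩

theorem isLeftLcm_of_isLeftLcm_coe (hS : S.LeftDivisorClosed) {z a b : S}
    (hz : IsLeftLcm (z : M) a b) : IsLeftLcm z a b :=
  ⟨rdiv_of_rdiv_coe hS hz.1, rdiv_of_rdiv_coe hS hz.2.1, fun w hwa hwb =>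
    rdiv_of_rdiv_coe hS (hz.2.2 w (rdiv_coe hwa) (rdiv_coe hwb))⟩

end Submonoid

open Submonoid in
/-- Every closed submonoid of a locally right Garside monoid is itself
locally right Garside. -/
theorem closedSubmonoid_locallyRightGarside {M : Type*} [Monoid M]
    (h : LocallyRightGarside M) (M₁ : Submonoid M) (hc : ClosedSubmonoid M₁) :
    LocallyRightGarside ↥M₁ := by
  constructor
  case rightCancel =>
    exact fun x y z hxz => Subtype.ext (h.rightCancel x y z (congrArg Subtype.val hxz))
  case lcm =>
    rintro a b ⟨w, hwa, hwb⟩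
    obtain ⟨z, hz⟩ := h.lcm a b ⟨w, rdiv_coe hwa, rdiv_coe hwb⟩
    exact ⟨⟨z, hc.1 a a.2 b b.2 z hz⟩,
      isLeftLcm_of_isLeftLcm_coe (leftDivisorClosed_of_closedSubmonoid hc) hz⟩
  case noChain =>
    rintro x ⟨f, hdiv, hstep⟩
    refine h.noChain x ⟨fun k => f k, fun k => rdiv_coe (hdiv k), fun k => ?_⟩
    obtain ⟨w, hw, hfw⟩ := hstep k
    exact ⟨w, fun hw1 => hw (Subtype.ext hw1), congrArg Subtype.val hfw⟩
end

section
/- Let M be a locally right Garside monoid, M₁ a closed submonoid of M, and M₁₁ a closed submonoid of M₁. Write t₁ = tail(z, M₁) for the maximal right divisor of z in M₁. Then for every z in M and every left divisor y of tail(z, M₁), one has tail((z·tail(z, M₁)⁻¹)·y, M₁₁) = tail(y, M₁₁). In particular tail(z, M₁₁) = tail(tail(z, M₁), M₁₁). -/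
/-! The whole argument is that an element `a` of `M₁` right-dividing `w * y` already
right-divides `y`. Indeed `y ∈ M₁` (closure under left divisors), so the left lcm `p * y = q * a`
of `y` and `a` lies in `M₁`, and so does `p`. Since `w * y` is a left multiple of `p * y`,
cancelling `y` shows that `p * t` right-divides `z = w * t`; maximality of the tail `t` then gives
`t = s * p * t`, hence `s * p = 1`, and `p = 1` because a locally right Garside monoid has no
nontrivial units. Thus `w * y` and `y` have the same right divisors in `M₁₁ ⊆ M₁`, hence the
same `M₁₁`-tail. -/

section

variable {M : Type*} [Monoid M]

theorem RDiv.mul_left {x a : M} (w : M) : RDiv x a → RDiv (w * x) a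
  | ⟨d, hd⟩ => ⟨w * d, by rw [hd, mul_assoc]⟩

theorem isTail_congr {A : Set M} {x y : M} (hxy : ∀ a ∈ A, RDiv x a ↔ RDiv y a) (u : M) :
    IsTail A x u ↔ IsTail A y u :=
  and_congr_right fun hu =>
    and_congr (hxy u hu) (forall₂_congr fun a ha => imp_congr_left (hxy a ha))

namespace LocallyRightGarside

/-- Otherwise the powers of `p` form an infinite chain of right divisors of `1 = s ^ k * p ^ k`. -/
theorem eq_one_of_mul_eq_one_s9 (h : LocallyRightGarside M) {s p : M} (hsp : s * p = 1) : p = 1 := by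
  by_contra hp
  refine h.noChain 1 ⟨fun k => p ^ k, fun k => ⟨s ^ k, ?_⟩, fun k => ⟨p, hp, pow_succ' p k⟩⟩
  induction k with
  | zero => simp
  | succ k ih =>
    calc (1 : M) = s ^ k * (s * p) * p ^ k := by rw [hsp, mul_one, ih]
      _ = s ^ (k + 1) * p ^ (k + 1) := by rw [pow_succ, pow_succ', mul_assoc, mul_assoc,
          mul_assoc]

theorem eq_one_of_isTail_of_rdiv (h : LocallyRightGarside M) {A : Submonoid M} {w t p : M}
    (ht : IsTail A (w * t) t) (hwp : RDiv w p) (hp : p ∈ A) : p = 1 := by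
  obtain ⟨r, rfl⟩ := hwp
  obtain ⟨s, hs⟩ := ht.2.2 (p * t) (A.mul_mem hp ht.1) ⟨r, mul_assoc r p t⟩
  exact h.eq_one_of_mul_eq_one_s9 (h.rightCancel (s * p) 1 t (by rw [one_mul, mul_assoc, ← hs]))

theorem rdiv_of_isTail_of_rdiv_mul (h : LocallyRightGarside M) {M₁ : Submonoid M}
    (hc1 : ClosedSubmonoid M₁) {w t y c : M} (ht : IsTail M₁ (w * t) t) (hyc : t = y * c)
    {a : M} (ha : a ∈ M₁) (hwya : RDiv (w * y) a) : RDiv y a := by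
  have hy : y ∈ M₁ := hc1.2 t ht.1 y c hyc
  obtain ⟨ℓ, hℓ⟩ := h.lcm y a ⟨w * y, ⟨w, rfl⟩, hwya⟩
  obtain ⟨p, hp⟩ := hℓ.1
  obtain ⟨q, hq⟩ := hℓ.2.1
  obtain ⟨r, hr⟩ := hℓ.2.2 (w * y) ⟨w, rfl⟩ hwya
  have hwrp : w = r * p := h.rightCancel _ _ y (by rw [hr, hp, mul_assoc])
  have hpM : p ∈ M₁ := hc1.2 ℓ (hc1.1 y hy a ha ℓ hℓ) p y hp
  have hp1 : p = 1 := h.eq_one_of_isTail_of_rdiv ht ⟨r, hwrp⟩ hpM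
  exact ⟨q, by rw [← hq, hp, hp1, one_mul]⟩

end LocallyRightGarside

end

theorem tail_transitivity_general {M : Type*} [Monoid M]
    (h : LocallyRightGarside M) (M₁ M₁₁ : Submonoid M) (hle : M₁₁ ≤ M₁)
    (hc1 : ClosedSubmonoid M₁)
    (z t : M) (ht : IsTail (↑M₁) z t) (w : M) (hw : z = w * t) :
    (∀ y c : M, t = y * c →
      ∀ u : M, IsTail (↑M₁₁) (w * y) u ↔ IsTail (↑M₁₁) y u) ∧
    (∀ u : M, IsTail (↑M₁₁) z u ↔ IsTail (↑M₁₁) t u) := by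
  subst hw
  have hdiv (y c : M) (hyc : t = y * c) : ∀ a ∈ M₁₁, RDiv (w * y) a ↔ RDiv y a :=
    fun a ha => ⟨h.rdiv_of_isTail_of_rdiv_mul hc1 ht hyc (hle ha), RDiv.mul_left w⟩
  have hleft (y c : M) (hyc : t = y * c) := isTail_congr (hdiv y c hyc)
  exact ⟨hleft, hleft t 1 (mul_one t).symm⟩

/-- transitivity of tails.  Let `M₁` be a closed submonoid of a locally
right Garside monoid `M` and `M₁₁` a closed submonoid of `M₁`.  If `t` is the `M₁`-tail
of `z`, say `z = w * t`, then for every left divisor `y` of `t` the `M₁₁`-tail of `w * y`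
is the `M₁₁`-tail of `y`; in particular the `M₁₁`-tail of `z` is the `M₁₁`-tail of `t`. -/
theorem tail_transitivity {M : Type*} [Monoid M]
    (h : LocallyRightGarside M) (M₁ M₁₁ : Submonoid M) (hle : M₁₁ ≤ M₁)
    (hc1 : ClosedSubmonoid M₁)
    (hc11lcm : ∀ a ∈ M₁₁, ∀ b ∈ M₁₁, ∀ z : M, IsLeftLcm z a b → z ∈ M₁₁)
    (hc11div : ∀ a ∈ M₁₁, ∀ y z : M, y ∈ M₁ → z ∈ M₁ → a = y * z → y ∈ M₁₁)
    (z t : M) (ht : IsTail (↑M₁) z t) (w : M) (hw : z = w * t) :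
    (∀ y c : M, t = y * c →
      ∀ u : M, IsTail (↑M₁₁) (w * y) u ↔ IsTail (↑M₁₁) y u) ∧
    (∀ u : M, IsTail (↑M₁₁) z u ↔ IsTail (↑M₁₁) t u) :=
  tail_transitivity_general h M₁ M₁₁ hle hc1 z t ht w hw
end

section
/- In the positive braid monoid B_n⁺ (n ≥ 3), every positive braid x admits a unique decomposition x = Φ_n^{p-1}(x_p)···Φ_n(x₂)·x₁ with x₁, ..., x_p in B_{n-1}⁺, x_p ≠ 1, such that for each r ≥ 2 the only generator σ_i that right-divides Φ_n^{p-r}(x_p)···Φ_n(x_{r+1})·x_r is σ₁. -/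
/-- The braid relations on the free monoid over `Fin N`
(generator `i : Fin N` stands for `σ_{i+1}`). -/
def braidRel (N : ℕ) : FreeMonoid (Fin N) → FreeMonoid (Fin N) → Prop := fun a b =>
  (∃ i j : Fin N, ((i : ℕ) + 2 ≤ (j : ℕ) ∨ (j : ℕ) + 2 ≤ (i : ℕ)) ∧
      a = FreeMonoid.of i * FreeMonoid.of j ∧ b = FreeMonoid.of j * FreeMonoid.of i) ∨
  (∃ i j : Fin N, ((i : ℕ) + 1 = (j : ℕ) ∨ (j : ℕ) + 1 = (i : ℕ)) ∧
      a = FreeMonoid.of i * FreeMonoid.of j * FreeMonoid.of i ∧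
      b = FreeMonoid.of j * FreeMonoid.of i * FreeMonoid.of j)

def braidCon (N : ℕ) : Con (FreeMonoid (Fin N)) := conGen (braidRel N)

/-- The positive braid monoid on `N+1` strands `B_{N+1}⁺`,
with generators `σ_1, …, σ_N` indexed by `Fin N`. -/
abbrev PosBraid (N : ℕ) := (braidCon N).Quotient

/-- The generator `σ_{i+1}` of the positive braid monoid. -/
def sigma {N : ℕ} (i : Fin N) : PosBraid N := (braidCon N).mk' (FreeMonoid.of i)

/-- The flip automorphism `Φ_{N+1} : σ_i ↦ σ_{N+1-i}`. -/
def flipH (N : ℕ) : PosBraid N →* PosBraid N :=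
  Con.lift _ ((braidCon N).mk'.comp (FreeMonoid.map Fin.rev)) <| by
    apply Con.conGen_le.mpr
    rintro a b (⟨i, j, hij, rfl, rfl⟩ | ⟨i, j, hij, rfl, rfl⟩) <;>
      simp only [Con.ker_rel, MonoidHom.comp_apply, map_mul, FreeMonoid.map_of] <;>
      refine (Con.eq _).mpr (ConGen.Rel.of _ _ ?_)
    · exact Or.inl ⟨Fin.rev i, Fin.rev j, by
        simp only [Fin.val_rev]; omega, rfl, rfl⟩
    · exact Or.inr ⟨Fin.rev i, Fin.rev j, by
        simp only [Fin.val_rev]; omega, rfl, rfl⟩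

/-- The inclusion `B_{N+1}⁺ → B_{N+2}⁺`. -/
def incl (N : ℕ) : PosBraid N →* PosBraid (N + 1) :=
  Con.lift _ ((braidCon (N + 1)).mk'.comp (FreeMonoid.map Fin.castSucc)) <| by
    apply Con.conGen_le.mpr
    rintro a b (⟨i, j, hij, rfl, rfl⟩ | ⟨i, j, hij, rfl, rfl⟩) <;>
      simp only [Con.ker_rel, MonoidHom.comp_apply, map_mul, FreeMonoid.map_of] <;>
      refine (Con.eq _).mpr (ConGen.Rel.of _ _ ?_)
    · exact Or.inl ⟨i.castSucc, j.castSucc, by simpa using hij, rfl, rfl⟩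
    · exact Or.inr ⟨i.castSucc, j.castSucc, by simpa using hij, rfl, rfl⟩

/-- Product `f^{p-1}(x_p) ⋯ f(x_2) · x_1` of the list `[x_p, …, x_1]`,
where each entry is twisted by an iterate of `f`. -/
def prodFlip {M : Type*} [Monoid M] (f : M → M) : List M → M
  | [] => 1
  | a :: t => f^[t.length] a * prodFlip f t

/-- `l = [x_p, …, x_1]` (a list of elements of `B_{k+1}⁺`) is the `(k+2)`-splitting of
`x ∈ B_{k+2}⁺` : `x = Φ^{p-1}(x_p) ⋯ Φ(x_2)·x_1`, the leading entry is non-trivial, and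
for every `r ≥ 2` the only generator `σ_i` right-dividing `Φ^{p-r}(x_p) ⋯ Φ(x_{r+1})·x_r`
is `σ_1`. -/
def IsSplit {k : ℕ} (x : PosBraid (k + 1)) (l : List (PosBraid k)) : Prop :=
  x = prodFlip (⇑(flipH (k + 1))) (l.map (incl k)) ∧
  l.head? ≠ some 1 ∧
  ∀ j, 1 ≤ j → j < l.length →
    (∃ z, prodFlip (⇑(flipH (k + 1))) ((l.take j).map (incl k)) =
        z * sigma (⟨0, Nat.succ_pos k⟩ : Fin (k + 1))) ∧
    ∀ i : Fin (k + 1),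
      (∃ z, prodFlip (⇑(flipH (k + 1))) ((l.take j).map (incl k)) = z * sigma i) →
      i = (⟨0, Nat.succ_pos k⟩ : Fin (k + 1))

/-- `σ_{i+1}` as an element of `B_{N+1}⁺`, extended by `1` for out-of-range indices. -/
def sigmaP (N : ℕ) (i : ℕ) : PosBraid N := if h : i < N then sigma ⟨i, h⟩ else 1

/-- `δ_{N+1} = σ_N σ_{N-1} ⋯ σ_1` in `B_{N+1}⁺`. -/
def deltaFull (N : ℕ) : PosBraid N := ((List.ofFn (sigma (N := N))).reverse).prod

/-- `Δ_m` (the Garside element of `B_m⁺`), viewed inside `B_{N+1}⁺`,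
via `Δ_1 = 1` and `Δ_{m+1} = σ_1 ⋯ σ_m · Δ_m`. -/
def DeltaP (N : ℕ) : ℕ → PosBraid N
  | 0 => 1
  | m + 1 => ((List.range m).map (sigmaP N)).prod * DeltaP N m

/-- `\widehatΔ_{N+1,d} = Φ^d(δ_{N+1}) ⋯ Φ²(δ_{N+1}) · Φ(δ_{N+1})` (`d` factors). -/
def hatDelta (N : ℕ) (d : ℕ) : PosBraid N :=
  ((List.range d).map (fun j => (⇑(flipH N))^[d - j] (deltaFull N))).prod

/-- ShortLex extension of a relation: compare lists first by length,
then lexicographically (from the left). -/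
def SL {α : Type*} (r : α → α → Prop) (s t : List α) : Prop :=
  s.length < t.length ∨ (s.length = t.length ∧ List.Lex r s t)

/-- The ordering `<⁺` of `B_{k+1}⁺`, defined recursively: on `B_2⁺` it is the comparison
of exponents of `σ_1`; on `B_{k+2}⁺` it is the ShortLex comparison of `(k+2)`-splittings,
entries being compared by `<⁺` on `B_{k+1}⁺`. -/
def ordP : (k : ℕ) → PosBraid k → PosBraid k → Prop
  | 0 => fun _ _ => False
  | 1 => fun x y => ∃ p q : ℕ, x = sigma (0 : Fin 1) ^ p ∧ y = sigma (0 : Fin 1) ^ q ∧ p < q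
  | (k + 2) => fun x y => ∃ lx ly : List (PosBraid (k + 1)),
      IsSplit x lx ∧ IsSplit y ly ∧ SL (ordP (k + 1)) lx ly

/-!
Positive braid monoids are cancellative, and every common multiple `σ_i x = σ_j y` of two
generators is a multiple of their least common multiple (`σ_i`, `σ_i σ_j = σ_j σ_i` or
`σ_i σ_j σ_i = σ_j σ_i σ_j`). Following Garside, this is proved by induction on the length,
walking along a sequence of braid relations applied to words and composing the factorizations of
consecutive words; reversing words gives the same facts for right divisors.

Dividing `x ∈ B_n⁺` on the right by generators of `B_{n-1}⁺` as long as possible gives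
`x = y · b` with `b ∈ B_{n-1}⁺` and `σ_{n-1}` the only generator right-dividing `y`. By the
lcm property, `b` is the greatest right divisor of `x` lying in `B_{n-1}⁺`, so this factorization
is unique. Since `Φ_n(y)` is right-divisible only by `σ_1`, splitting it recursively and appending
`b` splits `x`. The length drops unless `b = 1`, and in that case `Φ_n(x)` ends in `σ_1`, so its
own lower part is non-trivial.
-/

theorem FreeMonoid.of_mul_eq_of_mul_iff {α : Type*} {a b : α} {x y : FreeMonoid α} :
    FreeMonoid.of a * x = FreeMonoid.of b * y ↔ a = b ∧ x = y := by
  rw [← FreeMonoid.toList.injective.eq_iff]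
  simp

theorem prodFlip_append_singleton {M : Type*} [Monoid M] (f : M →* M) (l : List M) (a : M) :
    prodFlip f (l ++ [a]) = f (prodFlip f l) * a := by
  induction l with
  | nil => simp [prodFlip]
  | cons c t ih =>
    simp only [List.cons_append, prodFlip, ih, List.length_append, List.length_singleton,
      map_mul, Function.iterate_succ_apply', mul_assoc]

namespace PosBraid

open FreeMonoid Relation

variable {N n : ℕ}

/-! ## Length and braid words -/

theorem induction_on {P : PosBraid N → Prop} (x : PosBraid N) (one : P 1)
    (sigma_mul : ∀ i x, P x → P (sigma i * x)) : P x := by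
  induction x using Con.induction_on with
  | H w =>
    induction w using FreeMonoid.inductionOn' with
    | one => exact one
    | of_mul i w ih => exact sigma_mul i _ ih

theorem exists_eq_mul_sigma {x : PosBraid N} (hx : x ≠ 1) : ∃ z i, x = z * sigma i := by
  induction x using induction_on with
  | one => exact absurd rfl hx
  | sigma_mul j y ih =>
    by_cases hy : y = 1
    · exact ⟨1, j, by rw [hy, one_mul, mul_one]⟩
    · obtain ⟨z, i, rfl⟩ := ih hy
      exact ⟨sigma j * z, i, (mul_assoc _ _ _).symm⟩

theorem exists_eq_sigma_mul {x : PosBraid N} (hx : x ≠ 1) : ∃ i z, x = sigma i * z := by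
  induction x using induction_on with
  | one => exact absurd rfl hx
  | sigma_mul i x _ => exact ⟨i, x, rfl⟩

def lengthHom (N : ℕ) : PosBraid N →* Multiplicative ℕ :=
  (braidCon N).lift (FreeMonoid.lift fun _ => Multiplicative.ofAdd 1) <| Con.conGen_le.mpr <| by
    rintro _ _ (⟨i, j, -, rfl, rfl⟩ | ⟨i, j, -, rfl, rfl⟩) <;> rfl

def len (x : PosBraid N) : ℕ := (lengthHom N x).toAdd

@[simp] theorem len_one : len (1 : PosBraid N) = 0 := rfl

@[simp] theorem len_mul (x y : PosBraid N) : len (x * y) = len x + len y := by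
  simp [len]

@[simp] theorem len_sigma (i : Fin N) : len (sigma i) = 1 := rfl

theorem len_sigma_mul (i : Fin N) (x : PosBraid N) : len (sigma i * x) = len x + 1 := by
  simp [add_comm]

theorem len_eq_of_sigma_mul_eq {i j : Fin N} {x y : PosBraid N}
    (h : sigma i * x = sigma j * y) : len x = len y := by
  simpa [len_sigma_mul] using congrArg len h

theorem eq_one_of_len_eq_zero {x : PosBraid N} (h : len x = 0) : x = 1 := by
  induction x using induction_on with
  | one => rfl
  | sigma_mul i x _ => simp at h

theorem mul_eq_one_iff {x y : PosBraid N} : x * y = 1 ↔ x = 1 ∧ y = 1 := by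
  refine ⟨fun h => ?_, fun ⟨hx, hy⟩ => by rw [hx, hy, one_mul]⟩
  have := congrArg len h
  simp only [len_mul, len_one] at this
  exact ⟨eq_one_of_len_eq_zero (by omega), eq_one_of_len_eq_zero (by omega)⟩

def Far (i j : Fin N) : Prop := (i : ℕ) + 2 ≤ j ∨ (j : ℕ) + 2 ≤ i

def Adj (i j : Fin N) : Prop := (i : ℕ) + 1 = j ∨ (j : ℕ) + 1 = i

theorem Far.symm {i j : Fin N} (h : Far i j) : Far j i := Or.symm h

theorem Adj.symm {i j : Fin N} (h : Adj i j) : Adj j i := Or.symm h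

theorem Far.ne {i j : Fin N} (h : Far i j) : i ≠ j := by
  rintro rfl; unfold Far at h; omega

theorem Adj.ne {i j : Fin N} (h : Adj i j) : i ≠ j := by
  rintro rfl; unfold Adj at h; omega

theorem Adj.not_far {i j : Fin N} (h : Adj i j) : ¬Far i j := by
  unfold Adj at h; unfold Far; omega

theorem eq_or_far_or_adj (i j : Fin N) : i = j ∨ Far i j ∨ Adj i j := by
  unfold Far Adj
  omega

theorem mk'_eq_of_braidRel {a b : FreeMonoid (Fin N)} (h : braidRel N a b) :
    (braidCon N).mk' a = (braidCon N).mk' b :=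
  (Con.eq _).mpr <| ConGen.Rel.of _ _ h

theorem sigma_mul_sigma_of_far {i j : Fin N} (h : Far i j) :
    sigma i * sigma j = sigma j * sigma i :=
  mk'_eq_of_braidRel <| Or.inl ⟨i, j, h, rfl, rfl⟩

theorem sigma_mul_sigma_mul_sigma_of_adj {i j : Fin N} (h : Adj i j) :
    sigma i * sigma j * sigma i = sigma j * sigma i * sigma j :=
  mk'_eq_of_braidRel <| Or.inr ⟨i, j, h, rfl, rfl⟩

theorem sigma_mul_sigma_mul_comm {i j : Fin N} (h : Far i j) (x : PosBraid N) :
    sigma i * (sigma j * x) = sigma j * (sigma i * x) := by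
  rw [← mul_assoc, sigma_mul_sigma_of_far h, mul_assoc]

theorem sigma_mul_sigma_mul_sigma_mul {i j : Fin N} (h : Adj i j) (x : PosBraid N) :
    sigma i * (sigma j * (sigma i * x)) = sigma j * (sigma i * (sigma j * x)) := by
  simp only [← mul_assoc, sigma_mul_sigma_mul_sigma_of_adj h]

inductive Step : FreeMonoid (Fin N) → FreeMonoid (Fin N) → Prop
  | rel {a b : FreeMonoid (Fin N)} (h : braidRel N a b) (w : FreeMonoid (Fin N)) :
      Step (a * w) (b * w)
  | cons (i : Fin N) {u v : FreeMonoid (Fin N)} (h : Step u v) : Step (of i * u) (of i * v)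

namespace Step

theorem symm {u v : FreeMonoid (Fin N)} (h : Step u v) : Step v u := by
  induction h with
  | rel h w =>
    refine .rel ?_ w
    rcases h with ⟨i, j, hij, rfl, rfl⟩ | ⟨i, j, hij, rfl, rfl⟩
    exacts [Or.inl ⟨j, i, hij.symm, rfl, rfl⟩, Or.inr ⟨j, i, hij.symm, rfl, rfl⟩]
  | cons i _ ih => exact .cons i ih

theorem mul_right {u v : FreeMonoid (Fin N)} (h : Step u v) (w : FreeMonoid (Fin N)) :
    Step (u * w) (v * w) := by
  induction h with
  | rel h w' => simpa only [mul_assoc] using Step.rel h (w' * w)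
  | cons i _ ih => simpa only [mul_assoc] using ih.cons i

theorem mul_left {u v : FreeMonoid (Fin N)} (h : Step u v) (w : FreeMonoid (Fin N)) :
    Step (w * u) (w * v) := by
  induction w using FreeMonoid.inductionOn' with
  | one => simpa only [one_mul] using h
  | of_mul i w ih => simpa only [mul_assoc] using ih.cons i

theorem mk'_eq {u v : FreeMonoid (Fin N)} (h : Step u v) :
    (braidCon N).mk' u = (braidCon N).mk' v := by
  induction h with
  | rel h w => simp only [map_mul, mk'_eq_of_braidRel h]
  | cons i _ ih => simp only [map_mul, ih]

theorem exists_eq_of_mul {u v : FreeMonoid (Fin N)} (h : Step u v) : ∃ i w, u = of i * w := by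
  cases h with
  | rel h w =>
    rcases h with ⟨i, j, -, rfl, rfl⟩ | ⟨i, j, -, rfl, rfl⟩
    exacts [⟨i, of j * w, mul_assoc _ _ _⟩, ⟨i, of j * of i * w, by simp only [mul_assoc]⟩]
  | cons i _ => exact ⟨i, _, rfl⟩

end Step

def stepCon (N : ℕ) : Con (FreeMonoid (Fin N)) where
  r := ReflTransGen Step
  iseqv := ⟨fun _ => .refl, fun h => by
    induction h with
    | refl => exact .refl
    | tail _ h ih => exact .head h.symm ih, .trans⟩
  mul' {w x y z} h₁ h₂ :=
    (h₁.lift (· * y) fun _ _ h => h.mul_right y).trans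
      (h₂.lift (x * ·) fun _ _ h => h.mul_left x)

theorem reflTransGen_step_of_mk'_eq {u v : FreeMonoid (Fin N)}
    (h : (braidCon N).mk' u = (braidCon N).mk' v) : ReflTransGen Step u v :=
  (Con.conGen_le (c := stepCon N)).mpr (fun _ _ hab => .single <| by simpa using Step.rel hab 1)
    ((Con.eq _).mp h)

theorem mk'_eq_of_reflTransGen_step {u v : FreeMonoid (Fin N)} (h : ReflTransGen Step u v) :
    (braidCon N).mk' u = (braidCon N).mk' v := by
  induction h with
  | refl => rfl
  | tail _ h ih => exact ih.trans h.mk'_eq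

/-! ## Common multiples of two generators -/

/-- The common multiple `σ_i x = σ_j y` is `L w` for the least common multiple `L` of `σ_i` and
`σ_j`. -/
def FactorsThroughLcm (i j : Fin N) (x y : PosBraid N) : Prop :=
  (i = j → x = y) ∧
  (Far i j → ∃ w, x = sigma j * w ∧ y = sigma i * w) ∧
  (Adj i j → ∃ w, x = sigma j * (sigma i * w) ∧ y = sigma i * (sigma j * w))

def LcmPropertyBelow (N m : ℕ) : Prop :=
  ∀ (x y : PosBraid N) (i j : Fin N), len x < m → sigma i * x = sigma j * y →
    FactorsThroughLcm i j x y

namespace FactorsThroughLcm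

variable {i j y : Fin N} {a b : PosBraid N} {m : ℕ}

theorem refl (i : Fin N) (x : PosBraid N) : FactorsThroughLcm i i x x :=
  ⟨fun _ => rfl, fun h => (h.ne rfl).elim, fun h => (h.ne rfl).elim⟩

theorem symm {x z : PosBraid N} (h : FactorsThroughLcm i j x z) : FactorsThroughLcm j i z x :=
  ⟨fun hij => (h.1 hij.symm).symm,
    fun hij => let ⟨w, h₁, h₂⟩ := h.2.1 hij.symm; ⟨w, h₂, h₁⟩,
    fun hij => let ⟨w, h₁, h₂⟩ := h.2.2 hij.symm; ⟨w, h₂, h₁⟩⟩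

theorem of_step {u v : FreeMonoid (Fin N)} (h : Step (of i * u) (of j * v)) :
    FactorsThroughLcm i j ((braidCon N).mk' u) ((braidCon N).mk' v) := by
  generalize hu : of i * u = u' at h
  generalize hv : of j * v = v' at h
  cases h with
  | rel hr w =>
    rcases hr with ⟨p, r, hpr, rfl, rfl⟩ | ⟨p, r, hpr, rfl, rfl⟩ <;>
      simp only [mul_assoc, of_mul_eq_of_mul_iff] at hu hv <;>
      obtain ⟨rfl, rfl⟩ := hu <;> obtain ⟨rfl, rfl⟩ := hv
    · have hpr : Far i j := hpr
      exact ⟨hpr.ne.elim, fun _ => ⟨(braidCon N).mk' w, rfl, rfl⟩,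
        fun h => (h.not_far hpr).elim⟩
    · have hpr : Adj i j := hpr
      exact ⟨hpr.ne.elim, fun h => (hpr.not_far h).elim,
        fun _ => ⟨(braidCon N).mk' w, rfl, rfl⟩⟩
  | cons p h =>
    simp only [of_mul_eq_of_mul_iff] at hu hv
    obtain ⟨rfl, rfl⟩ := hu
    obtain ⟨rfl, rfl⟩ := hv
    rw [h.mk'_eq]
    exact refl _ _

theorem of_far_of_far (ih : LcmPropertyBelow N m) (hm : len a < m) (hiy : Far i y) (hyj : Far y j)
    (h : sigma i * a = sigma j * b) :
    FactorsThroughLcm i j (sigma y * a) (sigma y * b) := by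
  have K := ih a b i j hm h
  refine ⟨fun hij => by rw [K.1 hij], fun hij => ?_, fun hij => ?_⟩
  · obtain ⟨w, rfl, rfl⟩ := K.2.1 hij
    exact ⟨sigma y * w, sigma_mul_sigma_mul_comm hyj w, sigma_mul_sigma_mul_comm hiy.symm w⟩
  · obtain ⟨w, rfl, rfl⟩ := K.2.2 hij
    refine ⟨sigma y * w, ?_, ?_⟩
    · rw [sigma_mul_sigma_mul_comm hyj, sigma_mul_sigma_mul_comm hiy.symm]
    · rw [sigma_mul_sigma_mul_comm hiy.symm, sigma_mul_sigma_mul_comm hyj]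

theorem of_far_of_adj (ih : LcmPropertyBelow N m) (hm : len a < m) (hiy : Far i y) (hyj : Adj y j)
    (h : sigma i * a = sigma j * (sigma y * b)) :
    FactorsThroughLcm i j (sigma y * a) (sigma y * (sigma j * b)) := by
  have hab := len_eq_of_sigma_mul_eq h
  have K := ih a _ i j hm h
  refine ⟨fun hij => ?_, fun hij => ?_, fun hij => ?_⟩
  · subst hij; exact (hyj.symm.not_far hiy).elim
  · obtain ⟨w, rfl, hw⟩ := K.2.1 hij
    obtain ⟨v, rfl, rfl⟩ :=
      (ih b w y i (by simp only [len_sigma_mul] at *; omega) hw).2.1 hiy.symm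
    refine ⟨sigma y * (sigma j * v), ?_, ?_⟩
    · rw [sigma_mul_sigma_mul_sigma_mul hyj]
    · rw [sigma_mul_sigma_mul_comm hij.symm, sigma_mul_sigma_mul_comm hiy.symm]
  · obtain ⟨w, rfl, hw⟩ := K.2.2 hij
    obtain ⟨v, rfl, hv⟩ :=
      (ih b _ y i (by simp only [len_sigma_mul] at *; omega) hw).2.1 hiy.symm
    have hwv := len_eq_of_sigma_mul_eq hv
    obtain ⟨t, rfl, rfl⟩ :=
      (ih w v j y (by simp only [len_sigma_mul] at *; omega) hv).2.2 hyj.symm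
    refine ⟨sigma y * (sigma j * (sigma i * t)), ?_, ?_⟩
    · rw [sigma_mul_sigma_mul_comm hiy, sigma_mul_sigma_mul_sigma_mul hyj,
        sigma_mul_sigma_mul_sigma_mul hij.symm, sigma_mul_sigma_mul_comm hiy.symm]
    · rw [sigma_mul_sigma_mul_sigma_mul hij.symm, sigma_mul_sigma_mul_comm hiy t,
        sigma_mul_sigma_mul_comm hiy.symm, sigma_mul_sigma_mul_sigma_mul hyj]

theorem of_adj_of_far (ih : LcmPropertyBelow N m) (hm : len b < m) (hiy : Adj i y) (hyj : Far y j)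
    (h : sigma i * (sigma y * a) = sigma j * b) :
    FactorsThroughLcm i j (sigma y * (sigma i * a)) (sigma y * b) :=
  (of_far_of_adj ih hm hyj.symm hiy.symm h.symm).symm

theorem of_adj_of_adj (ih : LcmPropertyBelow N m) (hm : len a + 1 < m) (hiy : Adj i y)
    (hyj : Adj y j)
    (h : sigma i * (sigma y * a) = sigma j * (sigma y * b)) :
    FactorsThroughLcm i j (sigma y * (sigma i * a)) (sigma y * (sigma j * b)) := by
  have hab := len_eq_of_sigma_mul_eq h
  have K := ih _ _ i j (by simp only [len_sigma_mul]; omega) h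
  refine ⟨fun hij => ?_, fun hij => ?_, fun hij => ?_⟩
  · subst hij
    rw [(ih a b y y (by omega) (K.1 rfl)).1 rfl]
  · obtain ⟨t, ht, hbt⟩ := K.2.1 hij
    obtain ⟨s, rfl, rfl⟩ := (ih a t y j (by omega) ht).2.2 hyj
    obtain ⟨r, rfl, hsr⟩ :=
      (ih b _ y i (by simp only [len_sigma_mul] at *; omega) hbt).2.2 hiy.symm
    have hsr' := (ih _ _ y y (by simp only [len_sigma_mul] at *; omega) hsr).1 rfl
    obtain ⟨q, rfl, rfl⟩ :=
      (ih s r j i (by simp only [len_sigma_mul] at *; omega) hsr').2.1 hij.symm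
    refine ⟨sigma y * (sigma j * (sigma i * (sigma y * q))), ?_, ?_⟩
    · rw [sigma_mul_sigma_mul_comm hij, sigma_mul_sigma_mul_sigma_mul hiy,
        sigma_mul_sigma_mul_sigma_mul hyj]
    · rw [sigma_mul_sigma_mul_comm hij.symm (sigma y * (sigma j * q)),
        sigma_mul_sigma_mul_sigma_mul hyj.symm, sigma_mul_sigma_mul_sigma_mul hiy.symm,
        sigma_mul_sigma_mul_comm hij (sigma y * q)]
  · unfold Adj at *; omega

theorem trans {x z w : PosBraid N} (ih : LcmPropertyBelow N (len z))
    (h₁ : FactorsThroughLcm i y x z) (h₂ : FactorsThroughLcm y j z w) :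
    FactorsThroughLcm i j x w := by
  rcases eq_or_far_or_adj i y with rfl | hiy | hiy
  · rwa [h₁.1 rfl]
  all_goals rcases eq_or_far_or_adj y j with rfl | hyj | hyj
  · rwa [← h₂.1 rfl]
  · obtain ⟨a, rfl, rfl⟩ := h₁.2.1 hiy
    obtain ⟨b, hab, rfl⟩ := h₂.2.1 hyj
    exact of_far_of_far ih (by simp) hiy hyj hab
  · obtain ⟨a, rfl, rfl⟩ := h₁.2.1 hiy
    obtain ⟨b, hab, rfl⟩ := h₂.2.2 hyj
    exact of_far_of_adj ih (by simp) hiy hyj hab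
  · rwa [← h₂.1 rfl]
  · obtain ⟨a, rfl, rfl⟩ := h₁.2.2 hiy
    obtain ⟨b, hab, rfl⟩ := h₂.2.1 hyj
    exact of_adj_of_far ih (by simp [hab]) hiy hyj hab
  · obtain ⟨a, rfl, rfl⟩ := h₁.2.2 hiy
    obtain ⟨b, hab, rfl⟩ := h₂.2.2 hyj
    exact of_adj_of_adj ih (by simp; omega) hiy hyj hab

end FactorsThroughLcm

theorem LcmPropertyBelow.mono {m m' : ℕ} (h : LcmPropertyBelow N m') (hm : m ≤ m') :
    LcmPropertyBelow N m :=
  fun x y i j hx => h x y i j (by omega)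

theorem lcmPropertyBelow (N m : ℕ) : LcmPropertyBelow N m := by
  induction m with
  | zero => exact fun x _ _ _ hx => absurd hx (Nat.not_lt_zero _)
  | succ m ih =>
    intro x y i j hx h
    obtain ⟨u, rfl⟩ := (braidCon N).mk'_surjective x
    obtain ⟨v, rfl⟩ := (braidCon N).mk'_surjective y
    suffices ∀ c, ReflTransGen Step (of i * u) c → ∀ k w, c = of k * w →
        FactorsThroughLcm i k ((braidCon N).mk' u) ((braidCon N).mk' w) from
      this _ (reflTransGen_step_of_mk'_eq h) j v rfl
    -- follow a rewriting sequence out of `σ_i u`, keeping track of the first letter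
    intro c hc
    induction hc with
    | refl =>
      intro k w h
      obtain ⟨rfl, rfl⟩ := of_mul_eq_of_mul_iff.mp h
      exact .refl _ _
    | tail hac hcb IH =>
      rintro k w rfl
      obtain ⟨k', w', rfl⟩ := hcb.exists_eq_of_mul
      have hac' : sigma i * (braidCon N).mk' u = sigma k' * (braidCon N).mk' w' :=
        mk'_eq_of_reflTransGen_step hac
      have hlen := len_eq_of_sigma_mul_eq hac'
      exact (IH k' w' rfl).trans (ih.mono (by omega)) (.of_step hcb)

theorem factorsThroughLcm_of_sigma_mul_eq {i j : Fin N} {x y : PosBraid N}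
    (h : sigma i * x = sigma j * y) : FactorsThroughLcm i j x y :=
  lcmPropertyBelow N _ x y i j (Nat.lt_succ_self _) h

def revHom (N : ℕ) : PosBraid N →* (PosBraid N)ᵐᵒᵖ :=
  (braidCon N).lift (FreeMonoid.lift fun i => MulOpposite.op (sigma i)) <| Con.conGen_le.mpr <| by
    rintro _ _ (⟨i, j, hij, rfl, rfl⟩ | ⟨i, j, hij, rfl, rfl⟩) <;>
      simp only [Con.ker_rel, map_mul, FreeMonoid.lift_eval_of, ← MulOpposite.op_mul,
        ← mul_assoc]
    · rw [sigma_mul_sigma_of_far (Or.symm hij)]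
    · rw [sigma_mul_sigma_mul_sigma_of_adj hij]

def rev (x : PosBraid N) : PosBraid N := (revHom N x).unop

@[simp] theorem rev_sigma (i : Fin N) : rev (sigma i) = sigma i := rfl

@[simp] theorem rev_mul (x y : PosBraid N) : rev (x * y) = rev y * rev x := by
  simp [rev]

@[simp] theorem rev_rev (x : PosBraid N) : rev (rev x) = x := by
  induction x using induction_on with
  | one => rfl
  | sigma_mul i x ih => simp [ih]

theorem rev_injective : Function.Injective (rev (N := N)) :=
  Function.LeftInverse.injective rev_rev

instance : IsLeftCancelMul (PosBraid N) where
  mul_left_cancel x y z h := by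
    induction x using induction_on with
    | one => simpa using h
    | sigma_mul i x ih =>
      simp only [mul_assoc] at h
      exact ih ((factorsThroughLcm_of_sigma_mul_eq h).1 rfl)

instance : IsRightCancelMul (PosBraid N) where
  mul_right_cancel a b c h :=
    rev_injective <| mul_left_cancel (a := rev a) <| by simpa only [rev_mul] using congrArg rev h

theorem exists_of_mul_sigma_eq_of_far {i j : Fin N} {x y : PosBraid N}
    (h : x * sigma i = y * sigma j) (hij : Far i j) :
    ∃ w, x = w * sigma j ∧ y = w * sigma i := by
  obtain ⟨w, hx, hy⟩ := (factorsThroughLcm_of_sigma_mul_eq (x := rev x) (y := rev y)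
    (by simpa using congrArg rev h)).2.1 hij
  exact ⟨rev w, by simpa using congrArg rev hx, by simpa using congrArg rev hy⟩

theorem exists_of_mul_sigma_eq_of_adj {i j : Fin N} {x y : PosBraid N}
    (h : x * sigma i = y * sigma j) (hij : Adj i j) :
    ∃ w, x = w * sigma i * sigma j ∧ y = w * sigma j * sigma i := by
  obtain ⟨w, hx, hy⟩ := (factorsThroughLcm_of_sigma_mul_eq (x := rev x) (y := rev y)
    (by simpa using congrArg rev h)).2.2 hij
  exact ⟨rev w, by simpa [mul_assoc] using congrArg rev hx,
    by simpa [mul_assoc] using congrArg rev hy⟩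

def lastLetters (x : PosBraid N) : Set (Fin N) := {i | ∃ z, x = z * sigma i}

theorem lastLetters_one : lastLetters (1 : PosBraid N) = ∅ :=
  Set.eq_empty_of_forall_notMem fun i ⟨z, hz⟩ => by simpa using congrArg len hz

theorem lastLetters_nonempty {x : PosBraid N} (hx : x ≠ 1) : (lastLetters x).Nonempty :=
  let ⟨z, i, hz⟩ := exists_eq_mul_sigma hx; ⟨i, z, hz⟩

@[simp] theorem flipH_sigma (i : Fin N) : flipH N (sigma i) = sigma i.rev := rfl

@[simp] theorem flipH_flipH (x : PosBraid N) : flipH N (flipH N x) = x := by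
  induction x using induction_on with
  | one => rfl
  | sigma_mul i x ih => simp [ih]

@[simp] theorem len_flipH (x : PosBraid N) : len (flipH N x) = len x := by
  induction x using induction_on with
  | one => rfl
  | sigma_mul i x ih => simp [ih]

theorem mem_lastLetters_flipH {x : PosBraid N} {i : Fin N} :
    i ∈ lastLetters (flipH N x) ↔ i.rev ∈ lastLetters x := by
  constructor
  · rintro ⟨z, hz⟩
    exact ⟨flipH N z, by simpa using congrArg (flipH N) hz⟩
  · rintro ⟨z, rfl⟩
    exact ⟨flipH N z, by simp⟩

theorem eq_one_of_flipH_eq_one {x : PosBraid N} (h : flipH N x = 1) : x = 1 := by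
  simpa using congrArg (flipH N) h

theorem lastLetters_flipH_subset {x : PosBraid N} {i : Fin N} (h : lastLetters x ⊆ {i}) :
    lastLetters (flipH N x) ⊆ {i.rev} := fun j hj => by
  simpa [Fin.rev_eq_iff] using h (mem_lastLetters_flipH.mp hj)

/-! ## The lower part of a positive braid -/

@[simp] theorem incl_sigma (i : Fin n) : incl n (sigma i) = sigma i.castSucc := rfl

@[simp] theorem len_incl (x : PosBraid n) : len (incl n x) = len x := by
  induction x using induction_on with
  | one => rfl
  | sigma_mul i x ih => simp [ih]

def lowerIndicator (n : ℕ) : PosBraid (n + 1) →* ℕ :=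
  (braidCon (n + 1)).lift (FreeMonoid.lift fun i => if (i : ℕ) < n then 1 else 0) <|
    Con.conGen_le.mpr <| by
      rintro _ _ (⟨i, j, -, rfl, rfl⟩ | ⟨i, j, -, rfl, rfl⟩) <;>
        simp only [Con.ker_rel, map_mul, FreeMonoid.lift_eval_of]
      · exact mul_comm _ _
      · split_ifs <;> rfl

theorem lowerIndicator_sigma (i : Fin (n + 1)) :
    lowerIndicator n (sigma i) = if (i : ℕ) < n then 1 else 0 := rfl

theorem mem_mrange_incl_iff {x : PosBraid (n + 1)} :
    x ∈ MonoidHom.mrange (incl n) ↔ lowerIndicator n x = 1 := by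
  constructor
  · rintro ⟨x, rfl⟩
    induction x using induction_on with
    | one => rfl
    | sigma_mul i x ih =>
      simp [ih, lowerIndicator_sigma]
  · intro hx
    induction x using induction_on with
    | one => exact one_mem _
    | sigma_mul i x ih =>
      rw [map_mul, mul_eq_one] at hx
      obtain ⟨x, rfl⟩ := ih hx.2
      have hi : (i : ℕ) < n := by
        by_contra h
        simp [lowerIndicator_sigma, h] at hx
      exact ⟨sigma ⟨i, hi⟩ * x, by simp⟩

theorem mul_mem_mrange_incl_iff {x y : PosBraid (n + 1)} :
    x * y ∈ MonoidHom.mrange (incl n) ↔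
      x ∈ MonoidHom.mrange (incl n) ∧ y ∈ MonoidHom.mrange (incl n) := by
  simp only [mem_mrange_incl_iff, map_mul, mul_eq_one]

theorem sigma_mem_mrange_incl_iff {i : Fin (n + 1)} :
    sigma i ∈ MonoidHom.mrange (incl n) ↔ i ≠ Fin.last n := by
  rw [mem_mrange_incl_iff, lowerIndicator_sigma, Ne, ← Fin.val_eq_val, Fin.val_last]
  split_ifs <;> simp <;> omega

theorem incl_injective : Function.Injective (incl n) := by
  intro x y h
  induction hm : len x using Nat.strong_induction_on generalizing x y with
  | _ m ih =>
  subst hm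
  by_cases hx : x = 1
  · subst hx
    exact (eq_one_of_len_eq_zero (by simpa using (congrArg len h).symm)).symm
  obtain ⟨a, x, rfl⟩ := exists_eq_sigma_mul hx
  have hy : y ≠ 1 := by rintro rfl; simpa using congrArg len h
  obtain ⟨b, y, rfl⟩ := exists_eq_sigma_mul hy
  simp only [map_mul, incl_sigma] at h
  have hlen := len_eq_of_sigma_mul_eq h
  simp only [len_incl] at hlen
  have ih' : ∀ x' y', len x' = len x → incl n x' = incl n y' → x' = y' :=
    fun x' y' hx' h' => ih (len x') (by simp [hx']) h' rfl
  have K := factorsThroughLcm_of_sigma_mul_eq h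
  rcases eq_or_far_or_adj a b with rfl | hab | hab
  · rw [ih' x y rfl (K.1 rfl)]
  · obtain ⟨w, hx', hy'⟩ := K.2.1 hab
    obtain ⟨w, rfl⟩ := (mul_mem_mrange_incl_iff.mp (by rw [← hx']; exact ⟨x, rfl⟩)).2
    rw [ih' x (sigma b * w) rfl (by simpa using hx'),
      ih' y (sigma a * w) (by simpa using hlen.symm) (by simpa using hy')]
    exact sigma_mul_sigma_mul_comm hab w
  · obtain ⟨w, hx', hy'⟩ := K.2.2 hab
    obtain ⟨w, rfl⟩ := (mul_mem_mrange_incl_iff.mp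
      (mul_mem_mrange_incl_iff.mp (by rw [← hx']; exact ⟨x, rfl⟩)).2).2
    rw [ih' x (sigma b * (sigma a * w)) rfl (by simpa using hx'),
      ih' y (sigma a * (sigma b * w)) (by simpa using hlen.symm) (by simpa using hy')]
    exact sigma_mul_sigma_mul_sigma_mul hab w

theorem exists_eq_mul_mem_mrange_incl (x : PosBraid (n + 1)) :
    ∃ y b, x = y * b ∧ lastLetters y ⊆ {Fin.last n} ∧ b ∈ MonoidHom.mrange (incl n) := by
  induction hm : len x using Nat.strong_induction_on generalizing x with
  | _ m ih =>
  by_cases hx : lastLetters x ⊆ {Fin.last n}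
  · exact ⟨x, 1, (mul_one x).symm, hx, one_mem _⟩
  obtain ⟨i, ⟨z, rfl⟩, hi⟩ := Set.not_subset.mp hx
  obtain ⟨y, b, rfl, hy, hb⟩ := ih _ (by simp [← hm]) z rfl
  exact ⟨y, b * sigma i, mul_assoc _ _ _, hy,
    mul_mem hb (sigma_mem_mrange_incl_iff.mpr hi)⟩

section LowerPart

variable {y y' b b' : PosBraid (n + 1)}

theorem mem_lastLetters_of_mem_lastLetters_mul (hy : lastLetters y ⊆ {Fin.last n})
    (hb : b ∈ MonoidHom.mrange (incl n)) {i : Fin (n + 1)} (hi : i ∈ lastLetters (y * b))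
    (hin : i ≠ Fin.last n) : i ∈ lastLetters b := by
  induction hm : len b using Nat.strong_induction_on generalizing b i with
  | _ m ih =>
  subst hm
  obtain ⟨z, hz⟩ := hi
  by_cases hb1 : b = 1
  · subst hb1
    exact absurd (hy ⟨z, by simpa using hz⟩) hin
  obtain ⟨c, j, rfl⟩ := exists_eq_mul_sigma hb1
  obtain ⟨hc, hj⟩ := mul_mem_mrange_incl_iff.mp hb
  rw [← mul_assoc] at hz
  rcases eq_or_far_or_adj i j with rfl | hij | hij
  · exact ⟨c, rfl⟩
  · obtain ⟨w, hw, -⟩ := exists_of_mul_sigma_eq_of_far hz hij.symm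
    obtain ⟨c, rfl⟩ := ih _ (by simp) hc ⟨w, hw⟩ hin rfl
    exact ⟨c * sigma j, by rw [mul_assoc, mul_assoc, sigma_mul_sigma_of_far hij.symm]⟩
  · obtain ⟨w, hw, -⟩ := exists_of_mul_sigma_eq_of_adj hz hij.symm
    obtain ⟨c, rfl⟩ := ih _ (by simp) hc ⟨w * sigma j, hw⟩ hin rfl
    rw [← mul_assoc] at hw
    obtain ⟨c, rfl⟩ := ih _ (by simp) (mul_mem_mrange_incl_iff.mp hc).1
      ⟨w, mul_right_cancel hw⟩ (sigma_mem_mrange_incl_iff.mp hj) rfl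
    exact ⟨c * sigma i * sigma j, by
      simpa only [mul_assoc] using congrArg (c * ·) (sigma_mul_sigma_mul_sigma_of_adj hij.symm)⟩

theorem exists_eq_mul_of_mul_eq_mul (hy : lastLetters y ⊆ {Fin.last n})
    (hb : b ∈ MonoidHom.mrange (incl n)) {z d : PosBraid (n + 1)}
    (hd : d ∈ MonoidHom.mrange (incl n)) (h : y * b = z * d) : ∃ e, b = e * d := by
  induction hm : len d using Nat.strong_induction_on generalizing b z d with
  | _ m ih =>
  subst hm
  by_cases hd1 : d = 1
  · exact ⟨b, by rw [hd1, mul_one]⟩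
  obtain ⟨d, i, rfl⟩ := exists_eq_mul_sigma hd1
  obtain ⟨hd, hi⟩ := mul_mem_mrange_incl_iff.mp hd
  obtain ⟨b, rfl⟩ := mem_lastLetters_of_mem_lastLetters_mul hy hb
    ⟨z * d, by rw [h, mul_assoc]⟩ (sigma_mem_mrange_incl_iff.mp hi)
  have h' : y * b = z * d := mul_right_cancel (b := sigma i) (by simpa only [mul_assoc] using h)
  obtain ⟨e, rfl⟩ := ih _ (by simp) (mul_mem_mrange_incl_iff.mp hb).1 hd h' rfl
  exact ⟨e, mul_assoc _ _ _⟩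

theorem eq_and_eq_of_mul_eq_mul (hy : lastLetters y ⊆ {Fin.last n})
    (hy' : lastLetters y' ⊆ {Fin.last n}) (hb : b ∈ MonoidHom.mrange (incl n))
    (hb' : b' ∈ MonoidHom.mrange (incl n)) (h : y * b = y' * b') : y = y' ∧ b = b' := by
  obtain ⟨e, rfl⟩ := exists_eq_mul_of_mul_eq_mul hy hb hb' h
  obtain ⟨e', he'⟩ := exists_eq_mul_of_mul_eq_mul hy' hb' hb h.symm
  obtain rfl : e = 1 := eq_one_of_len_eq_zero (by have := congrArg len he'; simp at this; omega)
  rw [one_mul] at h ⊢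
  exact ⟨mul_right_cancel h, rfl⟩

end LowerPart

/-! ## Splittings -/

def splitProd (l : List (PosBraid n)) : PosBraid (n + 1) :=
  prodFlip (flipH (n + 1)) (l.map (incl n))

theorem isSplit_iff {x : PosBraid (n + 1)} {l : List (PosBraid n)} :
    IsSplit x l ↔ x = splitProd l ∧ l.head? ≠ some 1 ∧
      ∀ j, 1 ≤ j → j < l.length → lastLetters (splitProd (l.take j)) = {0} := by
  simp only [Set.eq_singleton_iff_unique_mem]
  rfl

theorem isSplit_nil : IsSplit (1 : PosBraid (n + 1)) [] :=
  isSplit_iff.mpr ⟨rfl, by simp, by simp⟩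

theorem isSplit_append_singleton_iff {x : PosBraid (n + 1)} {l : List (PosBraid n)}
    {a : PosBraid n} :
    IsSplit x (l ++ [a]) ↔ IsSplit (splitProd l) l ∧
      (l ≠ [] → lastLetters (splitProd l) = {0}) ∧ (l = [] → a ≠ 1) ∧
      x = flipH (n + 1) (splitProd l) * incl n a := by
  have hprod : splitProd (l ++ [a]) = flipH (n + 1) (splitProd l) * incl n a := by
    simp [splitProd, prodFlip_append_singleton]
  have htake : ∀ j ≤ l.length, (l ++ [a]).take j = l.take j :=
    fun j hj => List.take_append_of_le_length hj
  have hhead : (l ++ [a]).head? ≠ some 1 ↔ (l.head? ≠ some 1 ∧ (l = [] → a ≠ 1)) := by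
    cases l <;> simp
  simp only [isSplit_iff, hprod, hhead, List.length_append, List.length_singleton]
  constructor
  · rintro ⟨hx, ⟨hhd, ha⟩, hj⟩
    refine ⟨⟨trivial, hhd, fun j hj1 hjl => ?_⟩, fun hl => ?_, ha, hx⟩
    · rw [← htake j hjl.le]; exact hj j hj1 (by omega)
    · have := hj l.length (List.length_pos_iff.mpr hl) (by omega)
      rwa [htake _ le_rfl, List.take_length] at this
  · rintro ⟨⟨-, hhd, hj⟩, hl, ha, hx⟩
    refine ⟨hx, ⟨hhd, ha⟩, fun j hj1 hjl => ?_⟩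
    rw [htake j (by omega)]
    rcases Nat.lt_or_ge j l.length with hjl' | hjl'
    · exact hj j hj1 hjl'
    · obtain rfl : j = l.length := by omega
      rw [List.take_length]
      exact hl (List.ne_nil_of_length_pos hj1)

theorem eq_nil_of_isSplit_one {l : List (PosBraid n)} (h : IsSplit 1 l) : l = [] := by
  rcases l.eq_nil_or_concat' with rfl | ⟨t, a, rfl⟩
  · rfl
  obtain ⟨-, ht, ha, h1⟩ := isSplit_append_singleton_iff.mp h
  obtain ⟨hY, hA⟩ := mul_eq_one_iff.mp h1.symm
  have hY := eq_one_of_flipH_eq_one hY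
  have hA : a = 1 := eq_one_of_len_eq_zero (by simpa using congrArg len hA)
  by_cases ht0 : t = []
  · exact absurd hA (ha ht0)
  · simpa [hY, lastLetters_one] using ht ht0

theorem lastLetters_splitProd_subset {x : PosBraid (n + 1)} {l : List (PosBraid n)}
    (h : IsSplit x l) (hl : l ≠ [] → lastLetters (splitProd l) = {0}) :
    lastLetters x ⊆ {0} := by
  rw [isSplit_iff.mp h |>.1]
  by_cases hl0 : l = []
  · simp [hl0, splitProd, prodFlip, lastLetters_one]
  · exact (hl hl0).subset

theorem isSplit_mul_incl {y : PosBraid (n + 1)} {l : List (PosBraid n)} {b : PosBraid n}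
    (hl : IsSplit (flipH (n + 1) y) l) (hy : lastLetters y ⊆ {Fin.last n})
    (hb : y = 1 → b ≠ 1) : IsSplit (y * incl n b) (l ++ [b]) := by
  have hyl : flipH (n + 1) y = splitProd l := (isSplit_iff.mp hl).1
  refine isSplit_append_singleton_iff.mpr ⟨hyl ▸ hl, fun hl0 => ?_, fun hl0 => ?_, ?_⟩
  · rw [← hyl]
    have hne : flipH (n + 1) y ≠ 1 := fun h1 => hl0 (eq_nil_of_isSplit_one (h1 ▸ hl))
    exact (lastLetters_nonempty hne).subset_singleton_iff.mp
      (by simpa using lastLetters_flipH_subset hy)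
  · exact hb (eq_one_of_flipH_eq_one (by rw [hyl, hl0]; rfl))
  · rw [← hyl, flipH_flipH]

theorem isSplit_unique {x : PosBraid (n + 1)} {l l' : List (PosBraid n)} (h : IsSplit x l)
    (h' : IsSplit x l') : l = l' := by
  induction l using List.reverseRecOn generalizing x l' with
  | nil =>
    rw [isSplit_iff.mp h |>.1] at h'
    exact (eq_nil_of_isSplit_one h').symm
  | append_singleton t a ih =>
    rcases l'.eq_nil_or_concat' with rfl | ⟨t', a', rfl⟩
    · rw [isSplit_iff.mp h' |>.1] at h
      exact eq_nil_of_isSplit_one h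
    obtain ⟨ht, htl, -, hx⟩ := isSplit_append_singleton_iff.mp h
    obtain ⟨ht', htl', -, hx'⟩ := isSplit_append_singleton_iff.mp h'
    obtain ⟨hY, hA⟩ := eq_and_eq_of_mul_eq_mul
      (by simpa using lastLetters_flipH_subset (lastLetters_splitProd_subset ht htl))
      (by simpa using lastLetters_flipH_subset (lastLetters_splitProd_subset ht' htl'))
      ⟨a, rfl⟩ ⟨a', rfl⟩ (hx.symm.trans hx')
    have hY : splitProd t = splitProd t' := by simpa using congrArg (flipH (n + 1)) hY
    rw [ih ht (hY ▸ ht'), incl_injective hA]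

theorem exists_isSplit (x : PosBraid (n + 2)) : ∃ l, IsSplit x l := by
  induction hm : len x using Nat.strong_induction_on generalizing x with
  | _ m ih =>
  have of_not_subset : ∀ x : PosBraid (n + 2), len x = m →
      ¬lastLetters x ⊆ {Fin.last (n + 1)} → ∃ l, IsSplit x l := by
    intro x hm hx
    obtain ⟨y, _, rfl, hy, ⟨b, rfl⟩⟩ := exists_eq_mul_mem_mrange_incl x
    have hb : b ≠ 1 := by rintro rfl; exact hx (by simpa using hy)
    obtain ⟨l, hl⟩ := ih (len (flipH (n + 2) y)) (by
      have : len b ≠ 0 := mt eq_one_of_len_eq_zero hb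
      simp only [len_flipH, ← hm, len_mul, len_incl]; omega) _ rfl
    exact ⟨_, isSplit_mul_incl hl hy fun _ => hb⟩
  by_cases hx : lastLetters x ⊆ {Fin.last (n + 1)}
  · by_cases hx1 : x = 1
    · exact ⟨[], hx1 ▸ isSplit_nil⟩
    have hfx : ¬lastLetters (flipH (n + 2) x) ⊆ {Fin.last (n + 1)} := fun h => by
      obtain ⟨i, hi⟩ := lastLetters_nonempty hx1
      obtain rfl : i = Fin.last (n + 1) := hx hi
      have := h ((mem_lastLetters_flipH (i := 0)).mpr (by simpa using hi))
      simp [Fin.ext_iff] at this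
    obtain ⟨l, hl⟩ := of_not_subset _ (by simp [hm]) hfx
    have := isSplit_mul_incl (b := 1) (by simpa using hl) hx (absurd · hx1)
    exact ⟨l ++ [1], by simpa using this⟩
  · exact of_not_subset x hm hx

end PosBraid

/-- in `B_n⁺` (`n = k+3 ≥ 3`), every positive braid `x` admits a unique
decomposition `x = Φ_n^{p-1}(x_p) ⋯ Φ_n(x_2) · x_1` with `x_1, …, x_p ∈ B_{n-1}⁺`,
`x_p ≠ 1`, such that for each `r ≥ 2` the only generator `σ_i` right-dividing
`Φ_n^{p-r}(x_p) ⋯ Φ_n(x_{r+1}) · x_r` is `σ_1`. -/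
theorem existsUnique_phi_splitting (k : ℕ) (x : PosBraid (k + 2)) :
    ∃! l : List (PosBraid (k + 1)), IsSplit x l :=
  let ⟨l, hl⟩ := PosBraid.exists_isSplit x
  ⟨l, hl, fun _ hl' => PosBraid.isSplit_unique hl' hl⟩
end
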